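/- arXiv:1906.02895 — 3 statements merged into one kernel-verified Lean document; each statement's English description precedes it below -/
import Mathlib

section
/- Let G be a finite simple graph with at least one edge and let F be a finite field. Then nd(G) ≤ |F|^{mr(F,G)} ≤ |F|^{nd(G)}. -/
/-!
Twins have the same neighbours outside themselves, and a twin class with at least two vertices
is a clique or an independent set. So the 0/1 matrix of `G` with a `1` on the diagonal exactly at
the vertices adjacent to one of their twins fits `G` and has equal rows on each twin class;
its rank is at most its number of distinct rows, hence `mr ≤ nd`. Conversely, in any symmetric
matrix fitting `G`, vertices with equal rows are twins, so `nd` is at most the number of distinct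
rows, and these all lie in the row space, which has `|F| ^ rank` elements.
-/

open scoped Classical

namespace AvgCutRank

variable {V : Type*} {W : Type*}

/-- Local complementation of `G` at a vertex `v`: complement the adjacency inside
the neighborhood of `v`. -/
def localComp (G : SimpleGraph V) (v : V) : SimpleGraph V where
  Adj x y := x ≠ y ∧ (G.Adj x y ↔ ¬(G.Adj v x ∧ G.Adj v y))
  symm := ⟨by
    rintro x y ⟨hxy, h⟩
    refine ⟨hxy.symm, ?_⟩
    rw [G.adj_comm y x, and_comm]
    exact h⟩
  loopless := ⟨fun x h => h.1 rfl⟩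

/-- Two graphs on the same vertex set are locally equivalent if one is obtained from
the other by a sequence of local complementations. -/
def LocallyEquivalent (G H : SimpleGraph V) : Prop :=
  Relation.ReflTransGen (fun A B => ∃ v, B = localComp A v) G H

/-- `H` is (isomorphic to) a vertex-minor of `G`: `H` is isomorphic to an induced
subgraph of a graph locally equivalent to `G`. -/
def IsVertexMinor (H : SimpleGraph W) (G : SimpleGraph V) : Prop :=
  ∃ (G' : SimpleGraph V) (s : Set V), LocallyEquivalent G G' ∧ Nonempty (H ≃g G'.induce s)

/-- The cut-rank of a set `X` of vertices: the rank over GF(2) of the `X × Xᶜ`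
adjacency submatrix. -/
noncomputable def cutRank [Fintype V] [DecidableEq V] (G : SimpleGraph V)
    (X : Finset V) : ℕ :=
  (Matrix.of fun (i : X) (j : (Xᶜ : Finset V)) =>
    if G.Adj i.1 j.1 then (1 : ZMod 2) else 0).rank

/-- The average cut-rank of a graph. -/
noncomputable def avgCutRank [Fintype V] [DecidableEq V] (G : SimpleGraph V) : ℝ :=
  (∑ X : Finset V, (cutRank G X : ℝ)) / 2 ^ Fintype.card V

/-- The maximum cut-rank of a graph. -/
noncomputable def maxCutRank [Fintype V] [DecidableEq V] (G : SimpleGraph V) : ℕ :=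
  Finset.univ.sup (cutRank G)

/-- `x` and `y` are equal or twins: they have the same neighbors outside `{x, y}`. -/
def TwinEq (G : SimpleGraph V) (x y : V) : Prop :=
  x = y ∨ ∀ z, z ≠ x → z ≠ y → (G.Adj x z ↔ G.Adj y z)

/-- `x` and `y` are twins. -/
def IsTwins (G : SimpleGraph V) (x y : V) : Prop :=
  x ≠ y ∧ ∀ z, z ≠ x → z ≠ y → (G.Adj x z ↔ G.Adj y z)

/-- Neighborhood diversity: the number of twin classes. -/
noncomputable def nd [Fintype V] [DecidableEq V] (G : SimpleGraph V) : ℕ :=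
  (Finset.univ.image fun x => Finset.univ.filter fun y => TwinEq G x y).card

/-- The minimum rank of a graph over a field `F`. -/
noncomputable def minRank (F : Type*) [Field F] [Fintype V] [DecidableEq V]
    (G : SimpleGraph V) : ℕ :=
  sInf { r : ℕ | ∃ A : Matrix V V F, A.IsSymm ∧
    (∀ i j, i ≠ j → (A i j ≠ 0 ↔ G.Adj i j)) ∧ A.rank = r }

/-- The clique delta-cover number: the minimum `t` such that the edge set of `G` is the
symmetric difference of the edge sets of `t` complete graphs (given by their vertex sets). -/
noncomputable def cliqueDeltaCover [Fintype V] [DecidableEq V] (G : SimpleGraph V) : ℕ :=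
  sInf { t : ℕ | ∃ S : Fin t → Finset V, ∀ x y : V, x ≠ y →
    (G.Adj x y ↔ Odd (Finset.univ.filter fun i => x ∈ S i ∧ y ∈ S i).card) }

/-- `C` is the vertex set of an attached star in `G`: the subgraph induced on `C` is a
star (with center `c`) all of whose noncentral vertices are leaves of `G`. -/
def IsAttachedStar (G : SimpleGraph V) (C : Set V) : Prop :=
  ∃ c ∈ C, (∃ x ∈ C, x ≠ c) ∧
    ∀ x ∈ C, x ≠ c → G.Adj c x ∧ ∀ y, G.Adj x y → y = c

/-- Deletion of a vertex: the induced subgraph on the complement of `{v}`. -/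
def deleteVert (G : SimpleGraph V) (v : V) : SimpleGraph {w : V // w ≠ v} :=
  SimpleGraph.comap Subtype.val G

/-- Deletion of a finite set of vertices. -/
def deleteVerts (G : SimpleGraph V) (T : Finset V) : SimpleGraph {w : V // w ∉ T} :=
  SimpleGraph.comap Subtype.val G

/-- The star `K_{1,m}` with center `0`. -/
def starGraph (m : ℕ) : SimpleGraph (Fin (m + 1)) :=
  SimpleGraph.fromRel fun x _ => x = 0

/-- The disjoint union of three copies of `K₂`. -/
def threeK2 : SimpleGraph (Fin 6) :=
  SimpleGraph.fromRel fun x y =>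
    (x = 0 ∧ y = 1) ∨ (x = 2 ∧ y = 3) ∨ (x = 4 ∧ y = 5)

/-- The disjoint union of two paths on three vertices. -/
def twoP3 : SimpleGraph (Fin 6) :=
  SimpleGraph.fromRel fun x y =>
    (x = 0 ∧ y = 1) ∨ (x = 1 ∧ y = 2) ∨ (x = 3 ∧ y = 4) ∨ (x = 4 ∧ y = 5)

/-- The disjoint union of `K₂` and the star `K_{1,k+1}`. -/
def K2PlusStar (k : ℕ) : SimpleGraph (Fin (k + 4)) :=
  SimpleGraph.fromRel fun x y => (x.val = 0 ∧ y.val = 1) ∨ (x.val = 2 ∧ 3 ≤ y.val)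

/-- `E_k`: the star `K_{1,k+1}` with one edge subdivided. Vertex `0` is the center,
`1` is the subdivision vertex, `2` is the leaf behind it, `3, …, k+2` are leaves. -/
def Egraph (k : ℕ) : SimpleGraph (Fin (k + 3)) :=
  SimpleGraph.fromRel fun x y =>
    (x.val = 0 ∧ y.val = 1) ∨ (x.val = 1 ∧ y.val = 2) ∨ (x.val = 0 ∧ 3 ≤ y.val)

/-- Finite graphs represented on the vertex sets `Fin n`. -/
abbrev GraphOn := Σ n : ℕ, SimpleGraph (Fin n)

/-- `H` is isomorphic to an induced subgraph of `G`. -/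
def IsIndSubgraph (H G : GraphOn) : Prop :=
  ∃ s : Set (Fin G.1), Nonempty (H.2 ≃g G.2.induce s)

/-- The sequence `x_n(ε)` from the paper. -/
noncomputable def xseq (ε : ℝ) : ℕ → ℤ
  | 0 => max ⌊2 - Real.logb 2 (1 - ε)⌋ 5
  | n + 1 => 2 ^ (8 * (n + 1) + 10) *
      ⌊(xseq ε n : ℝ) - Real.logb 2 (1 - Int.fract ((2 : ℝ) ^ (xseq ε n) * ε / 2)) + 1⌋

open Finset

theorem _root_.Finset.card_image_le_card_image_of_factorsThrough {α β γ : Type*} [DecidableEq β]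
    [DecidableEq γ] {f : α → β} {g : α → γ} (h : g.FactorsThrough f) (s : Finset α) :
    #(s.image g) ≤ #(s.image f) := by
  rcases s.eq_empty_or_nonempty with rfl | ⟨a, -⟩
  · simp
  calc #(s.image g) = #((s.image f).image (Function.extend f g fun _ => g a)) := by
        rw [image_image]
        congr 1
        exact image_congr fun x _ => (h.extend_apply _ x).symm
    _ ≤ #(s.image f) := card_image_le

theorem twinEq_equivalence (G : SimpleGraph V) : Equivalence (TwinEq G) where
  refl _ := Or.inl rfl
  symm
    | Or.inl h => Or.inl h.symm
    | Or.inr h => Or.inr fun z hzy hzx => (h z hzx hzy).symm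
  trans := by
    rintro x y z (rfl | hxy) (rfl | hyz)
    · exact Or.inl rfl
    · exact Or.inr hyz
    · exact Or.inr hxy
    by_cases hxz : x = z
    · exact Or.inl hxz
    refine Or.inr fun w hwx hwz => ?_
    by_cases hwy : w = y
    · subst hwy
      rw [G.adj_comm x w, hyz x (Ne.symm hwx) hxz, G.adj_comm z x,
        hxy z (Ne.symm hxz) (Ne.symm hwz), G.adj_comm w z]
    · exact (hxy w hwx hwy).trans (hyz w hwy hwz)

theorem adj_of_twinEq_of_twinEq {G : SimpleGraph V} {x y z : V} (hy : TwinEq G x y)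
    (hz : TwinEq G x z) (hxz : x ≠ z) (hxy : G.Adj x y) : G.Adj x z := by
  rcases ((twinEq_equivalence G).trans ((twinEq_equivalence G).symm hy) hz) with rfl | hyz
  · exact hxy
  exact G.adj_symm ((hyz x hxy.ne hxz).mp (G.adj_symm hxy))

section TwinClasses

variable [Fintype V] {G : SimpleGraph V}

theorem filter_twinEq_eq_iff {x y : V} :
    univ.filter (TwinEq G x) = univ.filter (TwinEq G y) ↔ TwinEq G x y := by
  have hG := twinEq_equivalence G
  refine ⟨fun h => ?_, fun h => ?_⟩
  · have : y ∈ univ.filter (TwinEq G x) := h ▸ mem_filter.mpr ⟨mem_univ y, hG.refl y⟩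
    simpa using this
  · ext z
    simpa using ⟨hG.trans (hG.symm h), hG.trans h⟩

theorem nd_le_card_image [DecidableEq V] {β : Type*} [DecidableEq β] (f : V → β)
    (hf : ∀ x y, f x = f y → TwinEq G x y) : nd G ≤ #(univ.image f) :=
  card_image_le_card_image_of_factorsThrough
    (fun x y hxy => filter_twinEq_eq_iff.mpr (hf x y hxy)) univ

theorem card_image_le_nd [DecidableEq V] {β : Type*} [DecidableEq β] (f : V → β)
    (hf : ∀ x y, TwinEq G x y → f x = f y) : #(univ.image f) ≤ nd G :=
  card_image_le_card_image_of_factorsThrough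
    (fun x y hxy => hf x y (filter_twinEq_eq_iff.mp hxy)) univ

end TwinClasses

section RowSpace

variable {m n R : Type*} [Fintype m] [Fintype n] [Field R] [DecidableEq (n → R)]

theorem _root_.Matrix.rank_le_card_image_row (A : Matrix m n R) :
    A.rank ≤ #(univ.image A.row) := by
  rw [Matrix.rank_eq_finrank_span_row, ← Set.toFinset_range]
  exact finrank_span_le_card _

theorem _root_.Matrix.card_image_row_le_card_pow_rank [Fintype R] (A : Matrix m n R) :
    #(univ.image A.row) ≤ Fintype.card R ^ A.rank := by
  rw [Matrix.rank_eq_finrank_span_row, ← Module.card_eq_pow_finrank, ← Set.toFinset_range,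
    Set.toFinset_card]
  exact Set.card_le_card Submodule.subset_span

end RowSpace

section GraphMatrix

variable {F : Type*} [Field F] {G : SimpleGraph V}

theorem twinEq_of_row_eq {A : Matrix V V F} (hA : ∀ i j, i ≠ j → (A i j ≠ 0 ↔ G.Adj i j))
    {x y : V} (h : A.row x = A.row y) : TwinEq G x y :=
  Or.inr fun z hzx hzy => by
    rw [← hA x z hzx.symm, ← hA y z hzy.symm, show A x z = A y z from congrFun h z]

def twinAdj (G : SimpleGraph V) (i j : V) : Prop :=
  G.Adj i j ∨ (i = j ∧ ∃ k, TwinEq G i k ∧ G.Adj i k)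

theorem twinAdj_comm {i j : V} (h : twinAdj G i j) : twinAdj G j i := by
  rcases h with h | ⟨rfl, h⟩
  · exact Or.inl h.symm
  · exact Or.inr ⟨rfl, h⟩

theorem twinAdj_of_twinEq {x y j : V} (hxy : TwinEq G x y) (h : twinAdj G x j) :
    twinAdj G y j := by
  by_cases hxy_eq : x = y
  · exact hxy_eq ▸ h
  have hxy_twin := hxy.resolve_left hxy_eq
  rcases h with hadj | ⟨rfl, k, hk, hadj⟩
  · by_cases hjy : j = y
    · exact Or.inr ⟨hjy.symm, x, (twinEq_equivalence G).symm hxy, hjy ▸ hadj.symm⟩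
    · exact Or.inl ((hxy_twin j hadj.ne.symm hjy).mp hadj)
  · exact Or.inl (adj_of_twinEq_of_twinEq hk hxy hxy_eq hadj).symm

variable (F G) in
noncomputable def twinMatrix : Matrix V V F :=
  Matrix.of fun i j => if twinAdj G i j then 1 else 0

theorem twinMatrix_ne_zero_iff {i j : V} (hij : i ≠ j) :
    twinMatrix F G i j ≠ 0 ↔ G.Adj i j := by
  simp [twinMatrix, twinAdj, hij]

theorem twinMatrix_isSymm : (twinMatrix F G).IsSymm :=
  Matrix.IsSymm.ext fun _ _ => if_congr ⟨twinAdj_comm, twinAdj_comm⟩ rfl rfl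

theorem twinMatrix_row_eq {x y : V} (h : TwinEq G x y) :
    (twinMatrix F G).row x = (twinMatrix F G).row y :=
  funext fun _ => if_congr
    ⟨twinAdj_of_twinEq h, twinAdj_of_twinEq ((twinEq_equivalence G).symm h)⟩ rfl rfl

end GraphMatrix

section MinRank

variable [Fintype V] [DecidableEq V] (F : Type*) [Field F] (G : SimpleGraph V)

theorem exists_rank_eq_minRank : ∃ A : Matrix V V F, A.IsSymm ∧
    (∀ i j, i ≠ j → (A i j ≠ 0 ↔ G.Adj i j)) ∧ A.rank = minRank F G :=
  Nat.sInf_mem (s := {r | ∃ A : Matrix V V F, A.IsSymm ∧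
    (∀ i j, i ≠ j → (A i j ≠ 0 ↔ G.Adj i j)) ∧ A.rank = r})
    ⟨_, twinMatrix F G, twinMatrix_isSymm, fun _ _ => twinMatrix_ne_zero_iff, rfl⟩

theorem minRank_le_nd : minRank F G ≤ nd G :=
  calc minRank F G ≤ (twinMatrix F G).rank :=
        Nat.sInf_le ⟨_, twinMatrix_isSymm, fun _ _ => twinMatrix_ne_zero_iff, rfl⟩
    _ ≤ #(univ.image (twinMatrix F G).row) := Matrix.rank_le_card_image_row _
    _ ≤ nd G := card_image_le_nd _ fun _ _ => twinMatrix_row_eq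

theorem nd_le_card_pow_minRank [Fintype F] : nd G ≤ Fintype.card F ^ minRank F G := by
  obtain ⟨A, -, hA, hrank⟩ := exists_rank_eq_minRank F G
  calc nd G ≤ #(univ.image A.row) := nd_le_card_image _ fun _ _ => twinEq_of_row_eq hA
    _ ≤ Fintype.card F ^ A.rank := A.card_image_row_le_card_pow_rank
    _ = Fintype.card F ^ minRank F G := by rw [hrank]

end MinRank

theorem stmt3_general {V F : Type} [Fintype V] [DecidableEq V] [Field F] [Fintype F]
    (G : SimpleGraph V) :
    nd G ≤ Fintype.card F ^ minRank F G ∧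
    Fintype.card F ^ minRank F G ≤ Fintype.card F ^ nd G :=
  ⟨nd_le_card_pow_minRank F G, Nat.pow_le_pow_right Fintype.card_pos (minRank_le_nd F G)⟩

/-- For a graph with at least one edge and a finite field `F`,
`nd(G) ≤ |F|^(mr(F,G)) ≤ |F|^(nd(G))`. -/
theorem stmt3 {V F : Type} [Fintype V] [DecidableEq V] [Field F] [Fintype F]
    (G : SimpleGraph V) (hE : ∃ x y, G.Adj x y) :
    nd G ≤ Fintype.card F ^ minRank F G ∧
    Fintype.card F ^ minRank F G ≤ Fintype.card F ^ nd G :=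
  stmt3_general G

end AvgCutRank
end

section
/- For every real α, the class of finite simple graphs G with average cut-rank Eρ(G) ≤ α is well-quasi-ordered by the relation 'is isomorphic to an induced subgraph of': every infinite sequence G₁, G₂, … of graphs with Eρ(G_i) ≤ α contains indices i < j such that G_i is isomorphic to an induced subgraph of G_j. -/
open scoped Classical

namespace AvgCutRank

variable {V : Type*} {W : Type*}

/-!
Take a minimal set `Z` of vertices such that two vertices with the same neighbours in `Z` are
twins. By minimality each `z ∈ Z` has a private pair `x, y` that only `z` tells apart within `Z`.
For a cut `S`, the vertices `z ∉ S` whose private pair lies in `S` index an identity submatrix of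
the cut matrix of `S`; since each `z` is counted this way by `2 ^ (n - 3)` cuts, `#Z ≤ 8 Eρ(G)`.
So a graph with `Eρ(G) ≤ α` is a blow-up of a template on `2 ^ ⌊8α⌋` twin classes. In an
infinite sequence two graphs share the template and have pointwise comparable class sizes
(Dickson's lemma), and then the first embeds as an induced subgraph of the second.
-/

open Finset

variable {ι : Type*}

section Twins

variable {G : SimpleGraph V} {x x' y y' z : V}

theorem TwinEq.symm (h : TwinEq G x y) : TwinEq G y x :=
  h.imp Eq.symm fun h z hzy hzx => (h z hzx hzy).symm

theorem TwinEq.adj_iff_of_ne (h : TwinEq G y y') (hy : x ≠ y) (hy' : x ≠ y') :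
    G.Adj x y ↔ G.Adj x y' := by
  rcases h with rfl | h
  · rfl
  · rw [G.adj_comm, h x hy hy', G.adj_comm]

theorem TwinEq.trans (h₁ : TwinEq G x y) (h₂ : TwinEq G y z) : TwinEq G x z := by
  rcases h₁ with rfl | h₁
  · exact h₂
  rcases h₂ with rfl | h₂
  · exact Or.inr h₁
  by_cases hxz : x = z
  · exact Or.inl hxz
  refine Or.inr fun w hwx hwz => ?_
  by_cases hwy : w = y
  · subst hwy
    rw [G.adj_comm x w, h₂ x (Ne.symm hwx) hxz, G.adj_comm z x,
      h₁ z (Ne.symm hxz) (Ne.symm hwz), G.adj_comm]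
  · exact (h₁ w hwx hwy).trans (h₂ w hwy hwz)

theorem TwinEq.adj_iff (hx : TwinEq G x x') (hy : TwinEq G y y') (hxy : x ≠ y)
    (hxy' : x' ≠ y') : G.Adj x y ↔ G.Adj x' y' := by
  by_cases hxy'' : x = y'
  · subst hxy''
    by_cases hx'y : x' = y
    · subst hx'y
      exact G.adj_comm _ _
    rw [(hy.trans hx).adj_iff_of_ne hxy hxy'.symm, G.adj_comm]
  · rw [hy.adj_iff_of_ne hxy hxy'', G.adj_comm, G.adj_comm x',
      hx.adj_iff_of_ne (Ne.symm hxy'') hxy'.symm]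

end Twins

/-- `T` may relate a class to itself: that class is then a clique. -/
def IsBlowupOf (G : SimpleGraph V) (T : ι → ι → Prop) (c : V → ι) : Prop :=
  ∀ ⦃x y⦄, x ≠ y → (G.Adj x y ↔ T (c x) (c y))

def colouringTemplate (G : SimpleGraph V) (c : V → ι) (a b : ι) : Prop :=
  ∃ x y, x ≠ y ∧ G.Adj x y ∧ c x = a ∧ c y = b

theorem isBlowupOf_colouringTemplate {G : SimpleGraph V} {c : V → ι}
    (hc : ∀ x y, c x = c y → TwinEq G x y) : IsBlowupOf G (colouringTemplate G c) c :=
  fun x y hxy => ⟨fun h => ⟨x, y, hxy, h, rfl, rfl⟩, fun ⟨_, _, hxy', h, hx, hy⟩ =>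
    ((hc _ _ hx).symm.adj_iff (hc _ _ hy).symm hxy hxy').mpr h⟩

theorem IsBlowupOf.isIndContained [Finite V] [Finite W] {G : SimpleGraph V} {H : SimpleGraph W}
    {T : ι → ι → Prop} {cG : V → ι} {cH : W → ι} (hG : IsBlowupOf G T cG)
    (hH : IsBlowupOf H T cH)
    (hcard : ∀ a, Nat.card {x // cG x = a} ≤ Nat.card {y // cH y = a}) :
    G.IsIndContained H := by
  have he a : Nonempty ({x // cG x = a} ↪ {y // cH y = a}) := by
    have := Fintype.ofFinite {x // cG x = a}
    have := Fintype.ofFinite {y // cH y = a}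
    have h := hcard a
    rw [Nat.card_eq_fintype_card, Nat.card_eq_fintype_card] at h
    exact Function.Embedding.nonempty_of_card_le h
  let φ : V ↪ W := (Equiv.sigmaFiberEquiv cG).symm.toEmbedding.trans
    ((Function.Embedding.sigmaMap (.refl ι) fun a => (he a).some).trans
      (Equiv.sigmaFiberEquiv cH).toEmbedding)
  have hφ x : cH (φ x) = cG x := ((he (cG x)).some ⟨x, rfl⟩).2
  refine ⟨⟨φ, fun {x y} => ?_⟩⟩
  by_cases hxy : x = y
  · subst hxy
    simp
  · rw [hH (φ.injective.ne hxy), hG hxy, hφ, hφ]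

theorem _root_.Matrix.card_le_rank_of_submatrix_add_submatrix_eq_one {R m n : Type*}
    [CommRing R] [StrongRankCondition R] [Fintype m] [DecidableEq m] [Fintype n] [Fintype ι]
    [DecidableEq ι] (A : Matrix m n R) (r r' : ι → m) (c : ι → n)
    (h : A.submatrix r c + A.submatrix r' c = 1) : Fintype.card ι ≤ A.rank := by
  let E : Matrix ι m R := Matrix.of fun i => Pi.single (r i) 1 + Pi.single (r' i) 1
  have hE : (E * A).submatrix id c = 1 := by
    rw [← h]
    ext i j
    simp [E, Matrix.mul_apply, Pi.single_apply, add_mul, Finset.sum_add_distrib]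
  calc Fintype.card ι = (1 : Matrix ι ι R).rank := Matrix.rank_one.symm
    _ ≤ (E * A).rank := hE ▸ Matrix.rank_submatrix_le _ _ _
    _ ≤ A.rank := Matrix.rank_mul_le_right _ _

section Distinguishing

variable {G : SimpleGraph V} {Z : Finset V}

def AgreeOn (G : SimpleGraph V) (s : Set V) (x y : V) : Prop :=
  ∀ z ∈ s, z ≠ x → z ≠ y → (G.Adj x z ↔ G.Adj y z)

def IsDistinguishing (G : SimpleGraph V) (Z : Finset V) : Prop :=
  ∀ x y, AgreeOn G Z x y → TwinEq G x y

/-- `z` is the only vertex of `Z` that tells `x` and `y` apart. -/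
def IsPrivateSeparator (G : SimpleGraph V) (Z : Finset V) (z x y : V) : Prop :=
  z ≠ x ∧ z ≠ y ∧ ¬(G.Adj x z ↔ G.Adj y z) ∧ AgreeOn G (↑Z \ {z}) x y

theorem IsPrivateSeparator.ne {z x y : V} (h : IsPrivateSeparator G Z z x y) : x ≠ y := by
  rintro rfl
  exact h.2.2.1 Iff.rfl

theorem isDistinguishing_univ [Fintype V] (G : SimpleGraph V) : IsDistinguishing G univ :=
  fun x y h => (em (x = y)).imp id fun _ z hzx hzy => h z (mem_univ z) hzx hzy

theorem IsDistinguishing.exists_isPrivateSeparator {z : V} (hZ : IsDistinguishing G Z)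
    (hz : ¬IsDistinguishing G (Z.erase z)) : ∃ x y, IsPrivateSeparator G Z z x y := by
  simp only [IsDistinguishing, not_forall] at hz
  obtain ⟨x, y, hagree, hxy⟩ := hz
  rw [coe_erase] at hagree
  have hdisagree : ¬AgreeOn G Z x y := fun h => hxy (hZ x y h)
  simp only [AgreeOn, not_forall] at hdisagree
  obtain ⟨z', hz', hz'x, hz'y, hz'adj⟩ := hdisagree
  obtain rfl : z' = z := by
    by_contra hne
    exact hz'adj (hagree z' ⟨hz', hne⟩ hz'x hz'y)
  exact ⟨x, y, hz'x, hz'y, hz'adj, hagree⟩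

theorem exists_isDistinguishing_isPrivateSeparator [Fintype V] (G : SimpleGraph V) :
    ∃ Z, IsDistinguishing G Z ∧ ∀ z ∈ Z, ∃ x y, IsPrivateSeparator G Z z x y := by
  obtain ⟨Z, -, hZ⟩ := exists_minimal_le_of_wellFoundedLT _ _ (isDistinguishing_univ G)
  exact ⟨Z, hZ.prop, fun z hz =>
    hZ.prop.exists_isPrivateSeparator fun h => hZ.not_prop_of_lt (erase_ssubset hz) h⟩

end Distinguishing

section CutRank

variable [Fintype V] [DecidableEq V] {G : SimpleGraph V} {Z : Finset V}

theorem ite_add_ite_eq_ite_not_iff (P Q : Prop) [Decidable P] [Decidable Q] :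
    ((if P then 1 else 0) + (if Q then 1 else 0) : ZMod 2) = if ¬(P ↔ Q) then 1 else 0 := by
  split_ifs <;> first | rfl | tauto

/-- For the `z ∉ S` whose private pair lies in `S`, the sums of the two rows of each pair form an
identity matrix on the columns of those `z`. -/
theorem card_le_cutRank {p q : V → V} (hpq : ∀ z ∈ Z, IsPrivateSeparator G Z z (p z) (q z))
    (S : Finset V) : #{z ∈ Z | p z ∈ S ∧ q z ∈ S ∧ z ∉ S} ≤ cutRank G S := by
  set I := {z ∈ Z | p z ∈ S ∧ q z ∈ S ∧ z ∉ S}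
  have hI {z} (hz : z ∈ I) : z ∈ Z ∧ p z ∈ S ∧ q z ∈ S ∧ z ∉ S := mem_filter.mp hz
  have hsep {z z'} (hz : z ∈ I) (hz' : z' ∈ I) :
      ¬(G.Adj (p z) z' ↔ G.Adj (q z) z') ↔ z = z' := by
    obtain ⟨hzZ, hpS, hqS, -⟩ := hI hz
    obtain ⟨-, -, hdiff, hagree⟩ := hpq z hzZ
    obtain ⟨hz'Z, -, -, hz'S⟩ := hI hz'
    refine ⟨fun h => ?_, fun h => h ▸ hdiff⟩
    by_contra hne
    exact h (hagree z' ⟨hz'Z, Ne.symm hne⟩ (ne_of_mem_of_not_mem hpS hz'S).symm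
      (ne_of_mem_of_not_mem hqS hz'S).symm)
  rw [← Fintype.card_coe]
  refine Matrix.card_le_rank_of_submatrix_add_submatrix_eq_one _
    (fun z : I => ⟨p z, (hI z.2).2.1⟩) (fun z => ⟨q z, (hI z.2).2.2.1⟩)
    (fun z => ⟨z, mem_compl.mpr (hI z.2).2.2.2⟩) ?_
  ext z z'
  simp only [Matrix.add_apply, Matrix.submatrix_apply, Matrix.of_apply, Matrix.one_apply,
    ite_add_ite_eq_ite_not_iff, hsep z.2 z'.2, Subtype.ext_iff]

theorem card_filter_mem_mem_not_mem {x y z : V} (hxy : x ≠ y) (hzx : z ≠ x) (hzy : z ≠ y) :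
    #{S : Finset V | x ∈ S ∧ y ∈ S ∧ z ∉ S} = 2 ^ (Fintype.card V - 3) := by
  have hIcc : ({S : Finset V | x ∈ S ∧ y ∈ S ∧ z ∉ S} : Finset (Finset V)) =
      Icc {x, y} (univ.erase z) := by
    ext S
    simp [insert_subset_iff, subset_erase, and_assoc]
  rw [hIcc, card_Icc_finset (by simp [insert_subset_iff, hzx.symm, hzy.symm]),
    card_erase_of_mem (mem_univ z), card_pair hxy, card_univ, Nat.sub_sub]

theorem card_le_eight_mul_avgCutRank (hZ : ∀ z ∈ Z, ∃ x y, IsPrivateSeparator G Z z x y) :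
    (#Z : ℝ) ≤ 8 * avgCutRank G := by
  choose! p q hpq using hZ
  set n := Fintype.card V
  have hcount : #Z * 2 ^ (n - 3) ≤ ∑ S, cutRank G S := calc
    #Z * 2 ^ (n - 3) = ∑ z ∈ Z, #{S : Finset V | p z ∈ S ∧ q z ∈ S ∧ z ∉ S} := by
      rw [sum_congr rfl fun z hz => card_filter_mem_mem_not_mem (hpq z hz).ne
        (hpq z hz).1 (hpq z hz).2.1, sum_const, smul_eq_mul]
    _ = ∑ S, #{z ∈ Z | p z ∈ S ∧ q z ∈ S ∧ z ∉ S} :=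
      sum_card_bipartiteAbove_eq_sum_card_bipartiteBelow _
    _ ≤ ∑ S, cutRank G S := sum_le_sum fun S _ => card_le_cutRank hpq S
  have hpow : 2 ^ n ≤ 8 * 2 ^ (n - 3) := calc
    2 ^ n ≤ 2 ^ (n - 3 + 3) := Nat.pow_le_pow_right two_pos (by omega)
    _ = 8 * 2 ^ (n - 3) := by ring
  rw [avgCutRank, mul_div_assoc', le_div_iff₀ (by positivity)]
  exact_mod_cast calc #Z * 2 ^ n ≤ #Z * (8 * 2 ^ (n - 3)) := Nat.mul_le_mul_left _ hpow
    _ ≤ 8 * ∑ S, cutRank G S := by linarith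

end CutRank

theorem exists_twinEq_colouring [Fintype V] [DecidableEq V] (G : SimpleGraph V) {α : ℝ}
    (h : avgCutRank G ≤ α) :
    ∃ c : V → Fin (2 ^ ⌊8 * α⌋₊), ∀ x y, c x = c y → TwinEq G x y := by
  obtain ⟨Z, hZ, hsep⟩ := exists_isDistinguishing_isPrivateSeparator G
  have hcard : #Z ≤ ⌊8 * α⌋₊ :=
    Nat.le_floor ((card_le_eight_mul_avgCutRank hsep).trans (by linarith))
  have e : (Z → Prop) ↪ Fin (2 ^ ⌊8 * α⌋₊) := (Function.Embedding.nonempty_of_card_le (by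
    simpa using Nat.pow_le_pow_right two_pos hcard)).some
  exact ⟨fun x => e fun z => G.Adj x z, fun x y hxy => hZ x y fun z hz _ _ =>
    iff_of_eq (congrFun (e.injective hxy) ⟨z, hz⟩)⟩

/-- Every class of graphs of bounded average cut-rank is
well-quasi-ordered by the induced subgraph relation. -/
theorem stmt4 (α : ℝ) (V : ℕ → Type) [∀ i, Fintype (V i)] [∀ i, DecidableEq (V i)]
    (G : ∀ i, SimpleGraph (V i)) (h : ∀ i, avgCutRank (G i) ≤ α) :
    ∃ i j, i < j ∧ ∃ s : Set (V j), Nonempty (G i ≃g (G j).induce s) := by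
  choose c hc using fun i => exists_twinEq_colouring (G i) (h i)
  obtain ⟨i, j, hij, hsize,
      htemplate : colouringTemplate (G i) (c i) = colouringTemplate (G j) (c j)⟩ :=
    (wellQuasiOrdered_le.prod (Finite.wellQuasiOrdered (· = ·))) fun i =>
      ((fun a => Nat.card {x // c i x = a}), colouringTemplate (G i) (c i))
  refine ⟨i, j, hij, SimpleGraph.isIndContained_iff_exists_iso_induce.mp ?_⟩
  exact (isBlowupOf_colouringTemplate (hc i)).isIndContained
    (htemplate ▸ isBlowupOf_colouringTemplate (hc j)) hsize

end AvgCutRank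
end

section
/- Let G be a finite simple graph on at least one vertex, let T be the vertex set of an attached star in G, and let H = G − T. Then Eρ(G) − 1 < Eρ(H) ≤ Eρ(G) − 1 + 2^{1−|T|}. -/
open scoped Classical

/-!
For `X ⊆ V(G)` put `Y = X ∖ T`. The cut matrix of `H = G − T` at `Y` is the
`(X ∖ T) × (Xᶜ ∖ T)` block of the cut matrix of `G` at `X`. The leaves of the star are adjacent
only to its centre `c`, so outside this block the cut matrix of `G` vanishes except in the row
or column of `c`; hence `ρ_H(Y) ≤ ρ_G(X) ≤ ρ_H(Y) + 1`. If moreover `X` splits `T`, then the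
column (or row) of a leaf on the other side from `c` vanishes on the block but not at `c`, so
`ρ_G(X) = ρ_H(Y) + 1`. Every `Y` comes from `2^|T|` sets `X`. Summing the upper bound, with
`ρ_G(∅) = ρ_G(V) = 0`, gives `Eρ(G) ≤ Eρ(H) + 1 - 2^(1-|V|)`; summing the lower bound, where
at most `2 · 2^|V∖T|` sets `X` (those missing or containing `T`) fail to split `T`, gives
`Eρ(H) ≤ Eρ(G) - 1 + 2^(1-|T|)`.
-/

namespace Matrix

variable {α β F : Type*} [Field F]

theorem rank_add_le [Fintype β] (A B : Matrix α β F) : (A + B).rank ≤ A.rank + B.rank := by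
  rw [rank, rank, rank, mulVecLin_add]
  exact (Submodule.finrank_mono (LinearMap.range_add_le _ _)).trans
    (Submodule.finrank_add_le_finrank_add_finrank _ _)

theorem span_row_submatrix_le (A : Matrix α β F) (p : α → Prop) :
    Submodule.span F (Set.range (A.submatrix (Subtype.val : {i // p i} → α) id).row) ≤
      Submodule.span F (Set.range A.row) :=
  Submodule.span_mono <| by rintro _ ⟨i, rfl⟩; exact ⟨i.1, rfl⟩

variable [Fintype α] [Fintype β]

theorem rank_submatrix_of_row_eq_zero (A : Matrix α β F) (p : α → Prop)
    (hA : ∀ i, ¬ p i → A i = 0) :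
    (A.submatrix (Subtype.val : {i // p i} → α) id).rank = A.rank := by
  rw [rank_eq_finrank_span_row, rank_eq_finrank_span_row]
  refine congrArg (fun s : Submodule F (β → F) => Module.finrank F s) <|
    le_antisymm (span_row_submatrix_le A p) (Submodule.span_le.2 ?_)
  rintro _ ⟨i, rfl⟩
  by_cases hi : p i
  · exact Submodule.subset_span ⟨⟨i, hi⟩, rfl⟩
  · exact (congrArg (· ∈ _) (hA i hi)).mpr (Submodule.zero_mem _)

theorem rank_submatrix_of_col_eq_zero (A : Matrix α β F) (q : β → Prop) [DecidablePred q]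
    (hA : ∀ j, ¬ q j → ∀ i, A i j = 0) :
    (A.submatrix id (Subtype.val : {j // q j} → β)).rank = A.rank := by
  rw [← rank_transpose, transpose_submatrix,
    rank_submatrix_of_row_eq_zero Aᵀ q fun j hj => funext (hA j hj), rank_transpose]

theorem rank_submatrix_of_support_subset (A : Matrix α β F) (p : α → Prop) (q : β → Prop)
    [DecidablePred p] [DecidablePred q] (hA : ∀ i j, A i j ≠ 0 → p i ∧ q j) :
    (A.submatrix (Subtype.val : {i // p i} → α) (Subtype.val : {j // q j} → β)).rank =
      A.rank := by
  calc _ = ((A.submatrix (Subtype.val : {i // p i} → α) id).submatrix id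
          (Subtype.val : {j // q j} → β)).rank := rfl
    _ = (A.submatrix (Subtype.val : {i // p i} → α) id).rank :=
        rank_submatrix_of_col_eq_zero _ q fun j hj i => not_not.1 fun h => hj (hA _ _ h).2
    _ = A.rank :=
        rank_submatrix_of_row_eq_zero _ p fun i hi =>
          funext fun j => not_not.1 fun h => hi (hA _ _ h).1

theorem rank_le_rank_submatrix_add_one (A : Matrix α β F) (c : α) (p : α → Prop) (q : β → Prop)
    [DecidablePred p] [DecidablePred q] (hA : ∀ i j, A i j ≠ 0 → i = c ∨ p i ∧ q j) :
    A.rank ≤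
      (A.submatrix (Subtype.val : {i // p i} → α) (Subtype.val : {j // q j} → β)).rank + 1 := by
  set B : Matrix α β F := of fun i j => if p i ∧ q j then A i j else 0
  have hB : B.submatrix (Subtype.val : {i // p i} → α) (Subtype.val : {j // q j} → β) =
      A.submatrix Subtype.val Subtype.val := by
    ext i j; simp [B, i.2, j.2]
  have hAB : (A - B).rank ≤ 1 := by
    refine (rank_le_card_of_support_subset _ {c} ?_).trans (by simp)
    refine Function.support_subset_iff'.2 fun i hi => funext fun j => ?_
    by_cases hij : p i ∧ q j
    · simp [B, hij]
    · simpa [B, hij] using not_imp_comm.1 (hA i j) (by simpa [hij] using hi)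
  calc A.rank = (B + (A - B)).rank := by rw [add_sub_cancel]
    _ ≤ B.rank + 1 := (rank_add_le _ _).trans (by gcongr)
    _ = _ := by
      rw [← hB, rank_submatrix_of_support_subset B p q]
      intro i j hij; by_contra hn; exact hij (by simp [B, hn])

theorem rank_submatrix_lt (A : Matrix α β F) (p : α → Prop) {c : α} {l : β}
    (hp : ∀ i, p i → A i l = 0) (hc : A c l ≠ 0) :
    (A.submatrix (Subtype.val : {i // p i} → α) id).rank < A.rank := by
  rw [rank_eq_finrank_span_row, rank_eq_finrank_span_row]
  refine Submodule.finrank_lt_finrank_of_lt <|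
    lt_of_le_of_ne (span_row_submatrix_le A p) fun heq => hc ?_
  have hle : Submodule.span F (Set.range (A.submatrix (Subtype.val : {i // p i} → α) id).row) ≤
      LinearMap.ker (LinearMap.proj l) :=
    Submodule.span_le.2 <| by rintro _ ⟨i, rfl⟩; exact hp i.1 i.2
  exact hle (heq ▸ Submodule.subset_span ⟨c, rfl⟩)

end Matrix

namespace Finset

variable {α : Type*}

def subtypeEquivOfMemIff {p : α → Prop} (s : Finset α) (s' : Finset {a // p a})
    (h : ∀ y, y ∈ s' ↔ y.1 ∈ s) : s' ≃ {i : s // p i.1} where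
  toFun y := ⟨⟨y.1.1, (h y.1).1 y.2⟩, y.1.2⟩
  invFun i := ⟨⟨i.1.1, i.2⟩, (h _).2 i.1.2⟩
  left_inv _ := rfl
  right_inv _ := rfl

variable [Fintype α] [DecidableEq α]

theorem subtype_compl (p : α → Prop) [DecidablePred p] (s : Finset α) :
    (s.subtype p)ᶜ = sᶜ.subtype p := by
  ext; simp

def splitEquiv (T : Finset α) : Finset α ≃ Finset {a // a ∈ T} × Finset {a // a ∉ T} where
  toFun X := (X.subtype (· ∈ T), X.subtype (· ∉ T))
  invFun p := p.1.map (Function.Embedding.subtype _) ∪ p.2.map (Function.Embedding.subtype _)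
  left_inv X := by ext x; by_cases x ∈ T <;> simp [*]
  right_inv p := by ext ⟨x, hx⟩ <;> simp [hx]

theorem sum_comp_subtype_notMem {M : Type*} [AddCommMonoid M] (T : Finset α)
    (f : Finset {a // a ∉ T} → M) :
    ∑ X : Finset α, f (X.subtype (· ∉ T)) = 2 ^ #T • ∑ Y, f Y := by
  rw [Fintype.sum_equiv (splitEquiv T) (fun X => f (X.subtype (· ∉ T))) (fun p => f p.2)
    fun _ => rfl, Fintype.sum_prod_type]
  simp

theorem card_filter_subset_univ (s : Finset α) : #{X : Finset α | X ⊆ s} = 2 ^ #s := by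
  rw [← card_powerset]; congr 1; ext; simp

theorem card_filter_superset_univ (s : Finset α) : #{X : Finset α | s ⊆ X} = 2 ^ #sᶜ := by
  rw [← card_filter_subset_univ, ← card_map ⟨compl, compl_injective⟩]
  congr 1; ext X
  simp only [mem_filter, mem_univ, true_and, mem_map, Function.Embedding.coeFn_mk]
  exact ⟨by rintro ⟨Y, h, rfl⟩; simpa, fun h => ⟨Xᶜ, subset_compl_comm.1 h, compl_compl X⟩⟩

end Finset

namespace AvgCutRank

open Finset

section

variable {V : Type*} [Fintype V] [DecidableEq V]

noncomputable def cutMatrix (G : SimpleGraph V) (X : Finset V) : Matrix X ↥Xᶜ (ZMod 2) :=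
  Matrix.of fun i j => if G.Adj i.1 j.1 then 1 else 0

theorem cutRank_eq_rank_cutMatrix (G : SimpleGraph V) (X : Finset V) :
    cutRank G X = (cutMatrix G X).rank := rfl

theorem cutRank_compl (G : SimpleGraph V) (X : Finset V) : cutRank G Xᶜ = cutRank G X := by
  let e : ↥Xᶜᶜ ≃ X := Equiv.subtypeEquivRight fun _ => by rw [compl_compl]
  have h : cutMatrix G Xᶜ = (cutMatrix G X).transpose.submatrix (Equiv.refl _) e := by
    ext i j; simp [cutMatrix, e, G.adj_comm]
  rw [cutRank_eq_rank_cutMatrix, h, Matrix.rank_submatrix, Matrix.rank_transpose,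
    cutRank_eq_rank_cutMatrix]

theorem cutRank_empty (G : SimpleGraph V) : cutRank G ∅ = 0 :=
  Nat.eq_zero_of_le_zero <| (cutMatrix G ∅).rank_le_card_height.trans_eq <| by simp

theorem cutRank_univ (G : SimpleGraph V) : cutRank G univ = 0 := by
  rw [← compl_empty, cutRank_compl, cutRank_empty]

theorem cutRank_deleteVerts_subtype (G : SimpleGraph V) (T X : Finset V) :
    cutRank (deleteVerts G T) (X.subtype (· ∉ T)) =
      ((cutMatrix G X).submatrix (Subtype.val : {i : X // i.1 ∉ T} → X)
        (Subtype.val : {j : ↥Xᶜ // j.1 ∉ T} → ↥Xᶜ)).rank := by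
  rw [← Matrix.rank_submatrix _ (subtypeEquivOfMemIff X (X.subtype (· ∉ T)) fun _ => mem_subtype)
    (subtypeEquivOfMemIff Xᶜ (X.subtype (· ∉ T))ᶜ fun _ => by simp), cutRank_eq_rank_cutMatrix]
  rfl

theorem cutRank_deleteVerts_subtype_le (G : SimpleGraph V) (T X : Finset V) :
    cutRank (deleteVerts G T) (X.subtype (· ∉ T)) ≤ cutRank G X := by
  rw [cutRank_deleteVerts_subtype, cutRank_eq_rank_cutMatrix]
  exact Matrix.rank_submatrix_le _ _ _

theorem avgCutRank_eq_div (G : SimpleGraph V) (T : Finset V) :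
    avgCutRank G = (∑ X, (cutRank G X : ℝ)) / (2 ^ #T * 2 ^ #Tᶜ) := by
  rw [avgCutRank, ← pow_add, card_add_card_compl]

theorem avgCutRank_deleteVerts_eq_div (G : SimpleGraph V) (T : Finset V) :
    avgCutRank (deleteVerts G T) = (∑ Y, (cutRank (deleteVerts G T) Y : ℝ)) / 2 ^ #Tᶜ := by
  rw [avgCutRank, Fintype.card_subtype]
  congr 3
  ext; simp

def IsPendantStar (G : SimpleGraph V) (T : Finset V) (c : V) : Prop :=
  ∀ x ∈ T, x ≠ c → G.Adj c x ∧ ∀ y, G.Adj x y → y = c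

section PendantStar

variable {G : SimpleGraph V} {T : Finset V} {c : V}

theorem cutRank_le_cutRank_deleteVerts_add_one (hleaf : IsPendantStar G T c) (X : Finset V) :
    cutRank G X ≤ cutRank (deleteVerts G T) (X.subtype (· ∉ T)) + 1 := by
  wlog hcX : c ∈ X generalizing X
  · have h := this Xᶜ (mem_compl.2 hcX)
    rwa [← subtype_compl, cutRank_compl, cutRank_compl] at h
  rw [cutRank_deleteVerts_subtype, cutRank_eq_rank_cutMatrix]
  refine Matrix.rank_le_rank_submatrix_add_one _ ⟨c, hcX⟩ _ _ fun i j hij => ?_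
  have hadj : G.Adj i j := by simpa [cutMatrix] using hij
  have hj : j.1 ∉ X := mem_compl.1 j.2
  by_cases hi : i.1 = c
  · exact Or.inl (Subtype.ext hi)
  refine Or.inr ⟨fun hiT => hj ?_, fun hjT => hi ?_⟩
  · exact (hleaf i hiT hi).2 j hadj ▸ hcX
  · exact (hleaf j hjT fun h => hj (h ▸ hcX)).2 i hadj.symm

theorem cutRank_deleteVerts_add_one_le (hc : c ∈ T) (hleaf : IsPendantStar G T c)
    {X : Finset V} {a b : V} (ha : a ∈ T) (haX : a ∈ X) (hb : b ∈ T) (hbX : b ∉ X) :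
    cutRank (deleteVerts G T) (X.subtype (· ∉ T)) + 1 ≤ cutRank G X := by
  wlog hcX : c ∈ X generalizing X a b
  · have h := this hb (mem_compl.2 hbX) ha (by simpa using haX) (mem_compl.2 hcX)
    rwa [← subtype_compl, cutRank_compl, cutRank_compl] at h
  have hbc : b ≠ c := fun h => hbX (h ▸ hcX)
  rw [cutRank_deleteVerts_subtype, cutRank_eq_rank_cutMatrix, Nat.add_one_le_iff]
  set M := cutMatrix G X
  calc (M.submatrix (Subtype.val : {i : X // i.1 ∉ T} → X)
        (Subtype.val : {j : ↥Xᶜ // j.1 ∉ T} → ↥Xᶜ)).rank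
      ≤ (M.submatrix (Subtype.val : {i : X // i.1 ∉ T} → X) id).rank :=
        Matrix.rank_submatrix_le (M.submatrix _ id) id _
    _ < M.rank := Matrix.rank_submatrix_lt _ _ (c := ⟨c, hcX⟩) (l := ⟨b, mem_compl.2 hbX⟩) ?_ ?_
  · intro i hiT
    simp only [M, cutMatrix, Matrix.of_apply, ite_eq_right_iff, one_ne_zero, imp_false]
    exact fun hadj => hiT ((hleaf b hb hbc).2 i hadj.symm ▸ hc)
  · simp [M, cutMatrix, (hleaf b hb hbc).1]

theorem sum_cutRank_add_two_le (hleaf : IsPendantStar G T c) :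
    ∑ X, cutRank G X + 2 ≤
      2 ^ #T * ∑ Y, cutRank (deleteVerts G T) Y + 2 ^ Fintype.card V := by
  have hne : (∅ : Finset V) ≠ univ := (univ_nonempty_iff.2 ⟨c⟩).ne_empty.symm
  calc ∑ X, cutRank G X + 2
      = ∑ X : Finset V,
          (cutRank G X + ((if X = ∅ then 1 else 0) + if X = univ then 1 else 0)) := by
        simp [sum_add_distrib]
    _ ≤ ∑ X : Finset V, (cutRank (deleteVerts G T) (X.subtype (· ∉ T)) + 1) := by
        refine sum_le_sum fun X _ => ?_
        rcases eq_or_ne X ∅ with rfl | h0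
        · simp [cutRank_empty, hne]
        rcases eq_or_ne X univ with rfl | h1
        · simp [cutRank_univ, hne.symm]
        simpa [h0, h1] using cutRank_le_cutRank_deleteVerts_add_one hleaf X
    _ = _ := by simp [sum_add_distrib, sum_comp_subtype_notMem, Fintype.card_finset]

theorem sum_cutRank_deleteVerts_le (hc : c ∈ T) (hleaf : IsPendantStar G T c) :
    2 ^ #T * ∑ Y, cutRank (deleteVerts G T) Y + 2 ^ Fintype.card V ≤
      ∑ X, cutRank G X + 2 * 2 ^ #Tᶜ := by
  calc 2 ^ #T * ∑ Y, cutRank (deleteVerts G T) Y + 2 ^ Fintype.card V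
      = ∑ X : Finset V, (cutRank (deleteVerts G T) (X.subtype (· ∉ T)) + 1) := by
        simp [sum_add_distrib, sum_comp_subtype_notMem, Fintype.card_finset]
    _ ≤ ∑ X : Finset V,
          (cutRank G X + ((if X ⊆ Tᶜ then 1 else 0) + if T ⊆ X then 1 else 0)) := by
        refine sum_le_sum fun X _ => ?_
        have hle := cutRank_deleteVerts_subtype_le G T X
        by_cases hX : X ⊆ Tᶜ
        · rw [if_pos hX]; omega
        by_cases hT : T ⊆ X
        · rw [if_pos hT]; omega
        obtain ⟨a, haX, haT⟩ := not_subset.1 hX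
        obtain ⟨b, hbT, hbX⟩ := not_subset.1 hT
        rw [if_neg hX, if_neg hT]
        exact cutRank_deleteVerts_add_one_le hc hleaf (notMem_compl.1 haT) haX hbT hbX
    _ = ∑ X, cutRank G X + 2 * 2 ^ #Tᶜ := by
        simp [sum_add_distrib, sum_boole, card_filter_subset_univ, card_filter_superset_univ]
        ring

theorem avgCutRank_sub_one_lt_avgCutRank_deleteVerts (hleaf : IsPendantStar G T c) :
    avgCutRank G - 1 < avgCutRank (deleteVerts G T) := by
  have h := sum_cutRank_add_two_le hleaf
  rw [← card_add_card_compl T, pow_add] at h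
  have h' : ∑ X, (cutRank G X : ℝ) + 2 ≤
      2 ^ #T * ∑ Y, (cutRank (deleteVerts G T) Y : ℝ) + 2 ^ #T * 2 ^ #Tᶜ := by
    exact_mod_cast h
  rw [avgCutRank_eq_div G T, avgCutRank_deleteVerts_eq_div, sub_lt_iff_lt_add,
    div_lt_iff₀ (by positivity)]
  have hb : (2 : ℝ) ^ #Tᶜ ≠ 0 := by positivity
  calc ∑ X, (cutRank G X : ℝ)
      < 2 ^ #T * ∑ Y, (cutRank (deleteVerts G T) Y : ℝ) + 2 ^ #T * 2 ^ #Tᶜ := by linarith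
    _ = _ := by field_simp

theorem avgCutRank_deleteVerts_le_avgCutRank_sub_one_add (hc : c ∈ T)
    (hleaf : IsPendantStar G T c) :
    avgCutRank (deleteVerts G T) ≤ avgCutRank G - 1 + 2 / 2 ^ #T := by
  have h := sum_cutRank_deleteVerts_le hc hleaf
  rw [← card_add_card_compl T, pow_add] at h
  have h' : 2 ^ #T * ∑ Y, (cutRank (deleteVerts G T) Y : ℝ) + 2 ^ #T * 2 ^ #Tᶜ ≤
      ∑ X, (cutRank G X : ℝ) + 2 * 2 ^ #Tᶜ := by
    exact_mod_cast h
  rw [avgCutRank_eq_div G T, avgCutRank_deleteVerts_eq_div, ← sub_nonneg]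
  have key : (∑ X, (cutRank G X : ℝ)) / (2 ^ #T * 2 ^ #Tᶜ) - 1 + 2 / 2 ^ #T -
      (∑ Y, (cutRank (deleteVerts G T) Y : ℝ)) / 2 ^ #Tᶜ =
      (∑ X, (cutRank G X : ℝ) + 2 * 2 ^ #Tᶜ -
        (2 ^ #T * ∑ Y, (cutRank (deleteVerts G T) Y : ℝ) + 2 ^ #T * 2 ^ #Tᶜ)) /
          (2 ^ #T * 2 ^ #Tᶜ) := by
    field_simp
    ring
  rw [key]
  exact div_nonneg (sub_nonneg.2 h') (by positivity)

end PendantStar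

end

theorem stmt13_general {V : Type} [Fintype V] [DecidableEq V]
    (G : SimpleGraph V) (T : Finset V) (hT : IsAttachedStar G ↑T) :
    avgCutRank G - 1 < avgCutRank (deleteVerts G T) ∧
    avgCutRank (deleteVerts G T) ≤ avgCutRank G - 1 + (2 : ℝ) ^ (1 - (T.card : ℤ)) := by
  obtain ⟨c, hc, -, hleaf⟩ := hT
  rw [zpow_sub₀ two_ne_zero, zpow_one, zpow_natCast]
  exact ⟨avgCutRank_sub_one_lt_avgCutRank_deleteVerts hleaf,
    avgCutRank_deleteVerts_le_avgCutRank_sub_one_add hc hleaf⟩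

/-- If `T` is the vertex set of an attached star in `G` and
`H = G − T`, then `Eρ(G) − 1 < Eρ(H) ≤ Eρ(G) − 1 + 2^(1−|T|)`. -/
theorem stmt13 {V : Type} [Fintype V] [DecidableEq V] [Nonempty V]
    (G : SimpleGraph V) (T : Finset V) (hT : IsAttachedStar G ↑T) :
    avgCutRank G - 1 < avgCutRank (deleteVerts G T) ∧
    avgCutRank (deleteVerts G T) ≤ avgCutRank G - 1 + (2 : ℝ) ^ (1 - (T.card : ℤ)) :=
  stmt13_general G T hT

end AvgCutRank
end
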